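/- arXiv:1905.07924 — 2 statements merged into one kernel-verified Lean document; each statement's English description precedes it below -/
import Mathlib

section
/- Let j and k be positive integers with j ≤ k, let 𝒜 be a collection of j-element subsets of {1, …, k}, and let ξ₁, …, ξ_k be vectors in ℤ^j such that for every {i₁, …, i_j} ∈ 𝒜 the vectors ξ_{i₁}, …, ξ_{i_j} are linearly independent over ℤ. Then there exists a primitive vector ξ₀ ∈ ℤ^j such that for every I = {i₁, …, i_j} ∈ 𝒜 and every ℓ ∈ I, the j vectors obtained from {ξ_i : i ∈ I} by deleting ξ_ℓ and adjoining ξ₀ (i.e., ξ₀ together with the ξ_i for i ∈ I \ {ℓ}) are linearly independent over ℤ. -/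
/-
Pass to `ℚ^j`, where `ℤ`-linear independence becomes `ℚ`-linear independence. For each
`I ∈ 𝒜` and `ℓ ∈ I` the span of `{ξ_i : i ∈ I \ {ℓ}}` is a proper subspace, and a vector space
over an infinite field is not a finite union of proper subspaces, so some `v` avoids all of them
(and `0`). Clearing denominators and dividing by the gcd of the entries turns `v` into a primitive
integer vector spanning the same line, and adjoining a vector outside the span of a linearly
independent family keeps it linearly independent.
-/

/-- A vector `x ∈ ℤ^j` is primitive if it is nonzero and whenever `x = d • y`
with `d : ℤ` and `y : ℤ^j`, the integer `d` is a unit. -/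
def IsPrimitiveVec {j : ℕ} (x : Fin j → ℤ) : Prop :=
  x ≠ 0 ∧ ∀ (d : ℤ) (y : Fin j → ℤ), x = d • y → IsUnit d

open Module Submodule Set

theorem span_range_ne_top_of_card_lt_finrank {K V ι : Type*} [DivisionRing K] [AddCommGroup V]
    [Module K V] [Fintype ι] (v : ι → V) (h : Fintype.card ι < finrank K V) :
    span K (range v) ≠ ⊤ := by
  intro htop
  have := finrank_range_le_card (R := K) v
  rw [Set.finrank, htop, finrank_top] at this
  omega

theorem exists_ne_zero_forall_notMem_of_ne_top {K V ι : Type*} [DivisionRing K] [Infinite K]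
    [AddCommGroup V] [Module K V] [Nontrivial V] [Finite ι] (W : ι → Submodule K V)
    (hW : ∀ i, W i ≠ ⊤) : ∃ v : V, v ≠ 0 ∧ ∀ i, v ∉ W i := by
  by_contra! h
  have hcover : ⋃ o : Option ι, ((o.elim ⊥ W : Submodule K V) : Set V) = univ := by
    refine eq_univ_of_forall fun v => mem_iUnion.2 ?_
    by_cases hv : v = 0
    · exact ⟨none, hv⟩
    · obtain ⟨i, hi⟩ := h v hv
      exact ⟨some i, hi⟩
  obtain ⟨o, ho⟩ := Subspace.exists_eq_top_of_iUnion_eq_univ hcover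
  cases o with
  | none => exact bot_ne_top ho
  | some i => exact hW i ho

def castToRatVec (n : Type*) : (n → ℤ) →ₗ[ℤ] (n → ℚ) :=
  (Algebra.linearMap ℤ ℚ).compLeft n

theorem castToRatVec_apply {n : Type*} (x : n → ℤ) (m : n) : castToRatVec n x m = x m :=
  rfl

theorem castToRatVec_injective (n : Type*) : Function.Injective (castToRatVec n) :=
  fun _ _ h => funext fun m => Int.cast_injective (congrFun h m)

theorem linearIndependent_castToRatVec_comp_iff {n ι : Type*} {v : ι → n → ℤ} :
    LinearIndependent ℚ (castToRatVec n ∘ v) ↔ LinearIndependent ℤ v := by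
  rw [← LinearIndependent.iff_fractionRing ℤ ℚ]
  exact (castToRatVec n).linearIndependent_iff (LinearMap.ker_eq_bot.2 (castToRatVec_injective n))

theorem LinearIndependent.option_elim_of_castToRatVec_notMem {n ι : Type*} {v : ι → n → ℤ}
    (hv : LinearIndependent ℤ v) {x : n → ℤ}
    (hx : castToRatVec n x ∉ span ℚ (range (castToRatVec n ∘ v))) :
    LinearIndependent ℤ (fun o : Option ι => o.elim x v) := by
  rw [← linearIndependent_castToRatVec_comp_iff] at hv ⊢
  have hcomp : (fun o => Option.casesOn' o (castToRatVec n x) (castToRatVec n ∘ v)) =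
      castToRatVec n ∘ fun o : Option ι => o.elim x v :=
    funext fun o => by cases o <;> rfl
  exact hcomp ▸ hv.option hx

theorem exists_int_castToRatVec_eq_smul {n : Type*} [Finite n] (v : n → ℚ) :
    ∃ b : ℤ, b ≠ 0 ∧ ∃ x : n → ℤ, castToRatVec n x = (b : ℚ) • v := by
  obtain ⟨b, hb⟩ := IsLocalization.exist_integer_multiples_of_finite (nonZeroDivisors ℤ) v
  choose x hx using hb
  refine ⟨b, nonZeroDivisors.coe_ne_zero b, x, funext fun m => ?_⟩
  simpa [castToRatVec_apply, zsmul_eq_mul] using hx m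

theorem isPrimitiveVec_of_gcd_eq_one {j : ℕ} {y : Fin j → ℤ} (hy : Finset.univ.gcd y = 1) :
    IsPrimitiveVec y := by
  refine ⟨fun h => ?_, fun d z hz => isUnit_of_dvd_one ?_⟩
  · have : Finset.univ.gcd y = 0 := Finset.gcd_eq_zero_iff.2 fun m _ => by rw [h]; rfl
    exact zero_ne_one (this.symm.trans hy)
  · rw [← hy]
    exact Finset.dvd_gcd fun m _ => ⟨z m, by rw [hz]; rfl⟩

theorem exists_eq_smul_isPrimitiveVec {j : ℕ} {x : Fin j → ℤ} (hx : x ≠ 0) :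
    ∃ g : ℤ, ∃ y : Fin j → ℤ, IsPrimitiveVec y ∧ x = g • y := by
  have : Nonempty (Fin j) := by
    by_contra h
    exact hx (funext fun m => (h ⟨m⟩).elim)
  obtain ⟨y, hxy, hy⟩ := Finset.extract_gcd x Finset.univ_nonempty
  exact ⟨_, y, isPrimitiveVec_of_gcd_eq_one hy, funext fun m => hxy m (Finset.mem_univ m)⟩

theorem exists_isPrimitiveVec_castToRatVec_notMem {j : ℕ} (hj : 0 < j) {ι : Type*} [Finite ι]
    (W : ι → Submodule ℚ (Fin j → ℚ)) (hW : ∀ i, W i ≠ ⊤) :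
    ∃ y : Fin j → ℤ, IsPrimitiveVec y ∧ ∀ i, castToRatVec _ y ∉ W i := by
  have : Nonempty (Fin j) := ⟨⟨0, hj⟩⟩
  obtain ⟨v, hv0, hvW⟩ := exists_ne_zero_forall_notMem_of_ne_top W hW
  obtain ⟨b, hb, x, hx⟩ := exists_int_castToRatVec_eq_smul v
  have hbQ : (b : ℚ) ≠ 0 := Int.cast_ne_zero.2 hb
  obtain ⟨g, y, hy, rfl⟩ : ∃ g : ℤ, ∃ y, IsPrimitiveVec y ∧ x = g • y := by
    refine exists_eq_smul_isPrimitiveVec fun h => hv0 ?_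
    rw [h, map_zero, eq_comm, smul_eq_zero] at hx
    exact hx.resolve_left hbQ
  refine ⟨y, hy, fun i hyW => hvW i ?_⟩
  rw [← smul_mem_iff _ hbQ, ← hx, map_zsmul]
  exact (W i).toAddSubgroup.zsmul_mem hyW g

theorem exists_primitive_complement_general
    (j k : ℕ) (hj : 0 < j)
    (𝒜 : Set (Finset (Fin k))) (hcard : ∀ I ∈ 𝒜, I.card = j)
    (ξ : Fin k → (Fin j → ℤ))
    (hind : ∀ I ∈ 𝒜, LinearIndependent ℤ (fun i : I => ξ i)) :
    ∃ ξ₀ : Fin j → ℤ, IsPrimitiveVec ξ₀ ∧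
      ∀ I ∈ 𝒜, ∀ ℓ ∈ I,
        LinearIndependent ℤ
          (fun o : Option {i // i ∈ I.erase ℓ} => o.elim ξ₀ (fun i => ξ i.1)) := by
  let W (p : {p : Finset (Fin k) × Fin k // p.1 ∈ 𝒜 ∧ p.2 ∈ p.1}) : Submodule ℚ (Fin j → ℚ) :=
    span ℚ (range fun i : {i // i ∈ p.1.1.erase p.1.2} => castToRatVec _ (ξ i))
  have hW : ∀ p, W p ≠ ⊤ := fun ⟨(I, ℓ), hI, hℓ⟩ => span_range_ne_top_of_card_lt_finrank _ <| by
    rw [Fintype.card_coe, Finset.card_erase_of_mem hℓ, hcard I hI, finrank_fin_fun]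
    omega
  obtain ⟨ξ₀, hprim, hξ₀⟩ := exists_isPrimitiveVec_castToRatVec_notMem hj W hW
  refine ⟨ξ₀, hprim, fun I hI ℓ hℓ => ?_⟩
  have hrest : LinearIndependent ℤ (fun i : {i // i ∈ I.erase ℓ} => ξ i.1) :=
    (hind I hI).comp (fun i : {i // i ∈ I.erase ℓ} => (⟨i.1, Finset.mem_of_mem_erase i.2⟩ : I))
      fun _ _ h => Subtype.ext (congrArg (fun i : I => (i : Fin k)) h)
  exact hrest.option_elim_of_castToRatVec_notMem (hξ₀ ⟨(I, ℓ), hI, hℓ⟩)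

theorem exists_primitive_complement
    (j k : ℕ) (hj : 0 < j) (hk : 0 < k) (hjk : j ≤ k)
    (𝒜 : Set (Finset (Fin k))) (hcard : ∀ I ∈ 𝒜, I.card = j)
    (ξ : Fin k → (Fin j → ℤ))
    (hind : ∀ I ∈ 𝒜, LinearIndependent ℤ (fun i : I => ξ i)) :
    ∃ ξ₀ : Fin j → ℤ, IsPrimitiveVec ξ₀ ∧
      ∀ I ∈ 𝒜, ∀ ℓ ∈ I,
        LinearIndependent ℤ
          (fun o : Option {i // i ∈ I.erase ℓ} => o.elim ξ₀ (fun i => ξ i.1)) :=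
  exists_primitive_complement_general j k hj 𝒜 hcard ξ hind
end

section
/- Let N be a saturated submodule of ℤ^n, i.e., whenever m • x ∈ N for some nonzero integer m and x ∈ ℤ^n, then x ∈ N. Let ι : ℤ^n → ℝ^n be the componentwise coercion, let V = span_ℝ(ι(N)) ⊆ ℝ^n, and let L = ι(N) viewed as an additive subgroup of V. Then the additive group homomorphism V / L → ℝ^n / ι(ℤ^n) induced by the inclusion V ↪ ℝ^n is injective. -/
/-- The componentwise coercion `ι : ℤ^n → ℝ^n` as an additive group homomorphism. -/
def iotaHom (n : ℕ) : (Fin n → ℤ) →+ (Fin n → ℝ) where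
  toFun x := fun i => (x i : ℝ)
  map_zero' := by funext i; simp
  map_add' x y := by funext i; simp

/-!
Saturation says exactly that `ℤ^n ⧸ N` is torsion-free, hence free, so every `y ∉ N` is detected
by an integral linear form `f` vanishing on `N`. Extended to `ℝ^n`, `f` vanishes on
`span_ℝ ι(N)`; thus a lattice point of that span lies in `ι(N)`, which is injectivity of
`V ⧸ L → ℝ^n ⧸ ι(ℤ^n)`.
-/

theorem Submodule.isTorsionFree_quotient_of_smul_mem {R M : Type*} [Ring R] [Nontrivial R]
    [AddCommGroup M] [Module R M] {N : Submodule R M}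
    (hN : ∀ (r : R) (x : M), r ≠ 0 → r • x ∈ N → x ∈ N) :
    Module.IsTorsionFree R (M ⧸ N) := by
  refine .of_smul_eq_zero fun r q hrq => ?_
  induction q using Submodule.Quotient.induction_on with
  | H x =>
    rw [← Submodule.Quotient.mk_smul, Submodule.Quotient.mk_eq_zero] at hrq
    rw [Submodule.Quotient.mk_eq_zero]
    exact or_iff_not_imp_left.mpr fun hr => hN r x hr hrq

namespace Module.Dual

variable {ι : Type*} [Fintype ι] [DecidableEq ι] (S : Type*) [Ring S]

def intCast (f : Module.Dual ℤ (ι → ℤ)) : Module.Dual S (ι → S) :=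
  Fintype.linearCombination S fun i => (f (Pi.single i 1) : S)

theorem intCast_apply_intCast (f : Module.Dual ℤ (ι → ℤ)) (x : ι → ℤ) :
    f.intCast S (fun i => (x i : S)) = f x := by
  conv_rhs => rw [← (Pi.basisFun ℤ ι).sum_repr x]
  simp only [intCast, Fintype.linearCombination_apply, map_sum, map_zsmul, Pi.basisFun_repr,
    Pi.basisFun_apply, smul_eq_mul]
  push_cast
  rfl

end Module.Dual

theorem Submodule.mem_of_intCast_mem_span {ι : Type*} [Fintype ι] (S : Type*) [Ring S]
    [CharZero S] {N : Submodule ℤ (ι → ℤ)}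
    (hN : ∀ (m : ℤ) (x : ι → ℤ), m ≠ 0 → m • x ∈ N → x ∈ N) {y : ι → ℤ}
    (hy : (fun i => (y i : S)) ∈ span S ((fun x i => (x i : S)) '' (N : Set (ι → ℤ)))) :
    y ∈ N := by
  classical
  have := isTorsionFree_quotient_of_smul_mem hN
  by_contra hyN
  obtain ⟨f, hfy, hfN⟩ := N.exists_dual_map_eq_bot_of_notMem hyN inferInstance
  have hspan : span S ((fun x i => (x i : S)) '' (N : Set (ι → ℤ))) ≤
      LinearMap.ker (f.intCast S) := by
    rw [span_le]
    rintro _ ⟨x, hx, rfl⟩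
    have hfx : f x = 0 := (Submodule.eq_bot_iff _).mp hfN (f x) (mem_map_of_mem hx)
    simp [Module.Dual.intCast_apply_intCast, hfx]
  have hfy' : (f y : S) = 0 := (Module.Dual.intCast_apply_intCast S f y).symm.trans (hspan hy)
  exact hfy (by exact_mod_cast hfy')

theorem injective_quotient_map_of_saturated
    (n : ℕ) (N : Submodule ℤ (Fin n → ℤ))
    (hsat : ∀ (m : ℤ) (x : Fin n → ℤ), m ≠ 0 → m • x ∈ N → x ∈ N)
    (V : Submodule ℝ (Fin n → ℝ))
    (hV : V = Submodule.span ℝ (⇑(iotaHom n) '' (N : Set (Fin n → ℤ))))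
    (L : AddSubgroup V)
    (hL : L = AddSubgroup.comap V.toAddSubgroup.subtype
            (AddSubgroup.map (iotaHom n) N.toAddSubgroup)) :
    Function.Injective
      (QuotientAddGroup.map L (iotaHom n).range V.toAddSubgroup.subtype
        (by subst hL; rintro x ⟨y, hy, h⟩; exact ⟨y, h⟩)) := by
  subst hL
  rw [← AddMonoidHom.ker_eq_bot_iff, QuotientAddGroup.ker_map, AddSubgroup.map_eq_bot_iff,
    QuotientAddGroup.ker_mk']
  rintro v ⟨y, hy⟩
  have hyV : iotaHom n y ∈ V := hy ▸ v.2
  rw [hV] at hyV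
  exact ⟨y, Submodule.mem_of_intCast_mem_span ℝ hsat hyV, hy⟩
end
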